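/- With l(n) = (c(2n) − 1)/4, the limit as n → ∞ of l(4n+2)/l(4n+1) equals 17/5. -/

import Mathlib

/-!
Write `c n = S 2 n`, where `S x n = ∑ᵢ (C(n, i) mod 2) xⁱ` (`pascalMod2Eval`). Lucas' theorem modulo 2 gives
`S x (2m) = S (x²) m` and `S x (2m+1) = (1 + x) S (x²) m`, hence
`c (8n+4) = 17 S 256 n` and `c (8n+2) = 5 S 256 n`. So the ratio is `(17 s - 1)/(5 s - 1)` with
`s = S 256 n ≥ 256ⁿ → ∞`.
-/

def c (n : Nat) : Nat := ∑ i ∈ Finset.range (n+1), (Nat.choose n i % 2) * 2^i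

def F (k : Nat) : Nat := 2^(2^k) + 1

noncomputable def l (n : Nat) : ℝ := ((c (2*n) : ℝ) - 1) / 4

open Finset Filter Topology

def pascalMod2Eval (x n : ℕ) : ℕ := ∑ i ∈ range (n + 1), (n.choose i % 2) * x ^ i

lemma c_eq_pascalMod2Eval (n : ℕ) : c n = pascalMod2Eval 2 n := rfl

lemma choose_mod_two (n k : ℕ) :
    n.choose k % 2 = (n % 2).choose (k % 2) * (n / 2).choose (k / 2) % 2 :=
  have : Fact (Nat.Prime 2) := ⟨Nat.prime_two⟩
  Choose.choose_modEq_choose_mod_mul_choose_div_nat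

lemma sum_range_two_mul {M : Type*} [AddCommMonoid M] (f : ℕ → M) (m : ℕ) :
    ∑ i ∈ range (2 * m), f i = ∑ j ∈ range m, (f (2 * j) + f (2 * j + 1)) := by
  induction m with
  | zero => simp
  | succ m ih =>
    rw [show 2 * (m + 1) = 2 * m + 1 + 1 by ring, sum_range_succ, sum_range_succ, ih,
      sum_range_succ, add_assoc]

lemma pascalMod2Eval_two_mul (x m : ℕ) :
    pascalMod2Eval x (2 * m) = pascalMod2Eval (x ^ 2) m := by
  have hlast : (2 * m).choose (2 * m + 1) % 2 * x ^ (2 * m + 1) = 0 := by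
    simp
  rw [pascalMod2Eval, ← add_zero (∑ i ∈ _, _), ← hlast, ← sum_range_succ,
    show 2 * m + 1 + 1 = 2 * (m + 1) by ring, sum_range_two_mul, pascalMod2Eval]
  refine sum_congr rfl fun j _ => ?_
  rw [choose_mod_two (2 * m) (2 * j), choose_mod_two (2 * m) (2 * j + 1)]
  simp [Nat.mul_mod_right, pow_mul]

lemma pascalMod2Eval_two_mul_add_one (x m : ℕ) :
    pascalMod2Eval x (2 * m + 1) = (1 + x) * pascalMod2Eval (x ^ 2) m := by
  rw [pascalMod2Eval, show 2 * m + 1 + 1 = 2 * (m + 1) by ring, sum_range_two_mul,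
    pascalMod2Eval, mul_sum]
  refine sum_congr rfl fun j _ => ?_
  rw [choose_mod_two (2 * m + 1) (2 * j), choose_mod_two (2 * m + 1) (2 * j + 1)]
  simp [Nat.mul_add_div, pow_succ, pow_mul]
  ring

lemma pow_le_pascalMod2Eval (x n : ℕ) : x ^ n ≤ pascalMod2Eval x n := by
  simpa [pascalMod2Eval] using single_le_sum (f := fun i => n.choose i % 2 * x ^ i)
    (fun _ _ => Nat.zero_le _) (self_mem_range_succ n)

lemma c_eight_mul_add_four (n : ℕ) : c (8 * n + 4) = 17 * pascalMod2Eval 256 n := by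
  rw [c_eq_pascalMod2Eval, show 8 * n + 4 = 2 * (2 * (2 * n + 1)) by ring,
    pascalMod2Eval_two_mul, pascalMod2Eval_two_mul, pascalMod2Eval_two_mul_add_one]
  norm_num

lemma c_eight_mul_add_two (n : ℕ) : c (8 * n + 2) = 5 * pascalMod2Eval 256 n := by
  rw [c_eq_pascalMod2Eval, show 8 * n + 2 = 2 * (2 * (2 * n) + 1) by ring,
    pascalMod2Eval_two_mul, pascalMod2Eval_two_mul_add_one, pascalMod2Eval_two_mul]
  norm_num

lemma tendsto_mul_sub_one_div_mul_sub_one (a b : ℝ) (hb : b ≠ 0) :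
    Tendsto (fun x : ℝ => (a * x - 1) / (b * x - 1)) atTop (𝓝 (a / b)) := by
  have hlim : Tendsto (fun x : ℝ => (a - x⁻¹) / (b - x⁻¹)) atTop (𝓝 (a / b)) := by
    have h := (tendsto_inv_atTop_zero.const_sub a).div
      (tendsto_inv_atTop_zero.const_sub b) (by rwa [sub_zero])
    rwa [sub_zero, sub_zero] at h
  refine hlim.congr' ?_
  filter_upwards [eventually_gt_atTop 0] with x hx
  symm
  rw [← mul_div_mul_right _ _ (inv_ne_zero hx.ne'), sub_mul, sub_mul,
    mul_inv_cancel_right₀ hx.ne', mul_inv_cancel_right₀ hx.ne', one_mul]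

theorem stmt13 :
    Filter.Tendsto (fun n : Nat => l (4*n+2) / l (4*n+1)) Filter.atTop (nhds (17/5)) := by
  have hratio : ∀ n : ℕ, l (4 * n + 2) / l (4 * n + 1) =
      (17 * (pascalMod2Eval 256 n : ℝ) - 1) / (5 * (pascalMod2Eval 256 n : ℝ) - 1) := by
    intro n
    rw [l, l, show 2 * (4 * n + 2) = 8 * n + 4 by ring, show 2 * (4 * n + 1) = 8 * n + 2 by ring,
      c_eight_mul_add_four, c_eight_mul_add_two, div_div_div_cancel_right₀ four_ne_zero]
    push_cast
    ring
  have hgrowth : Tendsto (fun n => (pascalMod2Eval 256 n : ℝ)) atTop atTop :=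
    tendsto_atTop_mono (fun n => by exact_mod_cast pow_le_pascalMod2Eval 256 n)
      (tendsto_pow_atTop_atTop_of_one_lt (by norm_num : (1 : ℝ) < 256))
  exact ((tendsto_mul_sub_one_div_mul_sub_one 17 5 (by norm_num)).comp hgrowth).congr
    fun n => (hratio n).symm
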